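/- arXiv:1210.6576 — 6 statements merged into one kernel-verified Lean document; each statement's English description precedes it below -/
import Mathlib

section
/- If 0 ≤ α < 1 is a rational number with even-length continued fraction expansion [0;a_1,...,a_k] (k even, all a_i positive integers), then the expansion is palindromic (a_i = a_{k+1-i} for all i) if and only if the denominator of the penultimate convergent [0;a_1,...,a_{k-1}] equals the numerator of α (in lowest terms). -/
open Matrix

namespace Stmt1Aux

def A (x : ℕ) : Matrix (Fin 2) (Fin 2) ℕ := !![x, 1; 1, 0]

def M (w : List ℕ) : Matrix (Fin 2) (Fin 2) ℕ := (w.map A).prod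

@[simp] lemma M_nil : M [] = 1 := rfl

lemma M_cons (x : ℕ) (w : List ℕ) : M (x :: w) = A x * M w := by
  simp [M]

lemma M_append (u v : List ℕ) : M (u ++ v) = M u * M v := by
  simp [M]

lemma M_single (x : ℕ) : M [x] = A x := by simp [M]

lemma A_mul (x : ℕ) (N : Matrix (Fin 2) (Fin 2) ℕ) :
    A x * N = !![x * N 0 0 + N 1 0, x * N 0 1 + N 1 1; N 0 0, N 0 1] := by
  ext i j
  fin_cases i <;> fin_cases j <;>
    simp [A, Matrix.mul_apply, Fin.sum_univ_two]

lemma mul_A (x : ℕ) (N : Matrix (Fin 2) (Fin 2) ℕ) :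
    N * A x = !![x * N 0 0 + N 0 1, N 0 0; x * N 1 0 + N 1 1, N 1 0] := by
  ext i j
  fin_cases i <;> fin_cases j <;>
    simp [A, Matrix.mul_apply, Fin.sum_univ_two, Nat.mul_comm]

lemma A_transpose (x : ℕ) : (A x)ᵀ = A x := by
  ext i j
  fin_cases i <;> fin_cases j <;> simp [A]

lemma M_reverse (w : List ℕ) : M w.reverse = (M w)ᵀ := by
  induction w with
  | nil => simp
  | cons x t ih =>
      rw [List.reverse_cons, M_append, M_single, M_cons, Matrix.transpose_mul,
        A_transpose, ih]

lemma entry_get (N : Matrix (Fin 2) (Fin 2) ℕ) :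
    N = !![N 0 0, N 0 1; N 1 0, N 1 1] := by
  ext i j; fin_cases i <;> fin_cases j <;> rfl

lemma one_le_s (w : List ℕ) :
    1 ≤ M w 0 0 + M w 0 1 ∧ 1 ≤ M w 1 0 + M w 1 1 := by
  induction w with
  | nil => simp [M, Matrix.one_apply]
  | cons x t ih =>
      rw [M_cons, A_mul]
      simp only [Matrix.cons_val', Matrix.cons_val_zero, Matrix.cons_val_one,
        Matrix.head_cons, Matrix.empty_val', Matrix.cons_val_fin_one,
        Matrix.head_fin_const, Matrix.of_apply]
      omega

lemma s2_lt_s1 (w : List ℕ) (hw : w ≠ []) (hpos : ∀ x ∈ w, 1 ≤ x) :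
    M w 1 0 + M w 1 1 < M w 0 0 + M w 0 1 := by
  obtain ⟨x, t, rfl⟩ := List.exists_cons_of_ne_nil hw
  have hx : 1 ≤ x := hpos x (by simp)
  have h := one_le_s t
  rw [M_cons, A_mul]
  simp only [Matrix.cons_val', Matrix.cons_val_zero, Matrix.cons_val_one,
    Matrix.head_cons, Matrix.empty_val', Matrix.cons_val_fin_one,
    Matrix.head_fin_const, Matrix.of_apply]
  nlinarith [h.1, h.2]

lemma euclid_eq (x y S r1 r2 : ℕ) (h : x * S + r1 = y * S + r2)
    (h1 : r1 < S) (h2 : r2 < S) : x = y := by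
  rcases lt_trichotomy x y with h' | h' | h'
  · exfalso
    have hle : x * S + S ≤ y * S := by
      have : (x + 1) * S ≤ y * S := Nat.mul_le_mul_right _ h'
      linarith [this, Nat.add_mul x 1 S]
    omega
  · exact h'
  · exfalso
    have hle : y * S + S ≤ x * S := by
      have : (y + 1) * S ≤ x * S := Nat.mul_le_mul_right _ h'
      linarith [this, Nat.add_mul y 1 S]
    omega

lemma M_inj : ∀ w v : List ℕ, (∀ x ∈ w, 1 ≤ x) → (∀ x ∈ v, 1 ≤ x) →
    w.length = v.length → M w = M v → w = v := by
  intro w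
  induction w with
  | nil =>
      intro v _ _ hlen _
      exact (List.length_eq_zero_iff.mp hlen.symm).symm
  | cons x t ih =>
      intro v hw hv hlen hM
      obtain ⟨y, s, rfl⟩ := List.exists_cons_of_ne_nil
        (show v ≠ [] by intro h; subst h; simp at hlen)
      have hlen' : t.length = s.length := by simpa using hlen
      rw [M_cons, M_cons, A_mul, A_mul] at hM
      have h00 := congrFun (congrFun hM 0) 0
      have h01 := congrFun (congrFun hM 0) 1
      have h10 := congrFun (congrFun hM 1) 0
      have h11 := congrFun (congrFun hM 1) 1
      simp only [Matrix.cons_val', Matrix.cons_val_zero, Matrix.cons_val_one,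
        Matrix.head_cons, Matrix.empty_val', Matrix.cons_val_fin_one,
        Matrix.head_fin_const, Matrix.of_apply] at h00 h01 h10 h11
      -- h10 : M t 0 0 = M s 0 0, h11 : M t 0 1 = M s 0 1
      have hx : 1 ≤ x := hw x (by simp)
      have hy : 1 ≤ y := hv y (by simp)
      have hxy : x = y := by
        rcases eq_or_ne t [] with rfl | ht
        · have hs : s = [] := by simpa using hlen'.symm
          subst hs
          simp [M, Matrix.one_apply] at h00
          omega
        · have hs : s ≠ [] := by
            intro h; subst h; simp at hlen'; exact ht hlen'
          have l1 := s2_lt_s1 t ht (fun z hz => hw z (by simp [hz]))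
          have l2 := s2_lt_s1 s hs (fun z hz => hv z (by simp [hz]))
          have key : x * (M t 0 0 + M t 0 1) + (M t 1 0 + M t 1 1)
              = y * (M s 0 0 + M s 0 1) + (M s 1 0 + M s 1 1) := by
            rw [Nat.mul_add, Nat.mul_add]
            linarith [h00, h01]
          rw [h10, h11] at key l1
          exact euclid_eq x y _ _ _ key l1 l2
      subst hxy
      have hts : M t = M s := by
        rw [h10] at h00
        rw [h11] at h01
        have e1 : M t 1 0 = M s 1 0 := by omega
        have e2 : M t 1 1 = M s 1 1 := by omega
        ext i j
        fin_cases i <;> fin_cases j <;>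
          first | exact h10 | exact h11 | exact e1 | exact e2
      rw [ih s (fun z hz => hw z (by simp [hz])) (fun z hz => hv z (by simp [hz]))
        hlen' hts]

end Stmt1Aux

/-- For a rational 0 ≤ α < 1 with even-length continued fraction expansion
[0;a_1,...,a_k] (all a_i positive integers), the expansion is palindromic iff
the denominator of the penultimate convergent equals the numerator of α.
Here `p (n+1)`, `q (n+1)` denote the usual numerators/denominators p_n, q_n of
the convergents, defined by the standard recurrences (with shifted indexing so
that `p 0 = p_{-1} = 1`, `p 1 = p_0 = 0`, `q 0 = q_{-1} = 0`, `q 1 = q_0 = 1`). -/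
theorem stmt1 (k : ℕ) (hk : Even k) (hk0 : 0 < k)
    (a : ℕ → ℕ) (ha : ∀ i, 1 ≤ i → i ≤ k → 0 < a i)
    (p q : ℕ → ℕ)
    (hp0 : p 0 = 1) (hp1 : p 1 = 0) (hq0 : q 0 = 0) (hq1 : q 1 = 1)
    (hp : ∀ n, p (n + 2) = a (n + 1) * p (n + 1) + p n)
    (hq : ∀ n, q (n + 2) = a (n + 1) * q (n + 1) + q n) :
    (∀ i, 1 ≤ i → i ≤ k → a i = a (k + 1 - i)) ↔ q k = p (k + 1) := by
  classical
  set w : List ℕ := (List.range k).map (fun i => a (i + 1)) with hw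
  have hwlen : w.length = k := by simp [hw]
  have hwget : ∀ i (h : i < k), w[i]'(by simpa [hwlen] using h) = a (i + 1) := by
    intro i h; simp [hw]
  have hwpos : ∀ x ∈ w, 1 ≤ x := by
    intro x hx
    rw [hw] at hx
    simp only [List.mem_map, List.mem_range] at hx
    obtain ⟨i, hi, rfl⟩ := hx
    exact ha (i + 1) (by omega) (by omega)
  -- the product of the first n matrices
  have hprod : ∀ n, n ≤ k →
      Stmt1Aux.M (w.take n) = !![q (n + 1), q n; p (n + 1), p n] := by
    intro n
    induction n with
    | zero =>
        intro _
        rw [List.take_zero, Stmt1Aux.M_nil, hp0, hp1, hq0, hq1]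
        ext i j; fin_cases i <;> fin_cases j <;> simp [Matrix.one_apply]
    | succ n ihn =>
        intro hn
        have hn' : n < k := by omega
        have hn'' : n < w.length := by omega
        have htake : w.take (n + 1) = w.take n ++ [w[n]] :=
          (List.take_concat_get' w n hn'').symm
        rw [htake, Stmt1Aux.M_append, Stmt1Aux.M_single, ihn (by omega),
          Stmt1Aux.mul_A]
        have : w[n] = a (n + 1) := hwget n hn'
        rw [this, hp n, hq n]
        ext i j; fin_cases i <;> fin_cases j <;> simp
  have hMw : Stmt1Aux.M w = !![q (k + 1), q k; p (k + 1), p k] := by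
    have := hprod k le_rfl
    rwa [List.take_of_length_le (by omega)] at this
  -- palindrome iff reverse equals itself
  have hpal : (∀ i, 1 ≤ i → i ≤ k → a i = a (k + 1 - i)) ↔ w.reverse = w := by
    constructor
    · intro h
      apply List.ext_getElem (by simp)
      intro i h1 h2
      have hik : i < k := by simpa [hwlen] using h2
      rw [List.getElem_reverse]
      rw [hwget i hik]
      have : w.length - 1 - i < k := by omega
      rw [hwget _ this]
      have := h (i + 1) (by omega) (by omega)
      rw [this]
      congr 1
      omega
    · intro h i h1 h2
      have hik : i - 1 < k := by omega
      have e1 : w[i-1]'(by omega) = a i := by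
        rw [hwget _ hik]; congr 1; omega
      have e2 : w.reverse[i-1]'(by simp; omega) = w[i-1]'(by omega) :=
        List.getElem_of_eq h _
      rw [List.getElem_reverse] at e2
      rw [hwget _ (show w.length - 1 - (i-1) < k by omega)] at e2
      rw [e1] at e2
      rw [← e2]
      congr 1
      omega
  rw [hpal]
  constructor
  · intro h
    have := congrArg Stmt1Aux.M h
    rw [Stmt1Aux.M_reverse, hMw] at this
    have h01 := congrFun (congrFun this 1) 0
    have : q k = p (k + 1) := by simpa [Matrix.transpose_apply] using h01
    omega
  · intro h
    apply Stmt1Aux.M_inj w.reverse w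
      (fun x hx => hwpos x (List.mem_reverse.mp hx)) hwpos (by simp)
    rw [Stmt1Aux.M_reverse, hMw]
    ext i j
    fin_cases i <;> fin_cases j <;>
      simp [Matrix.transpose_apply, h]
end

section
/- Let 0 ≤ α < 1 be rational with even-length palindromic continued fraction expansion [0;a_1,...,a_k] of numerator p and denominator r (in lowest terms). Then r · p_{k-1} - p² = 1, where p_{k-1} is the numerator of the convergent [0;a_1,...,a_{k-1}]; in particular p² ≡ -1 (mod r). -/
private def Mcf (x : ℤ) : Matrix (Fin 2) (Fin 2) ℤ := !![x, 1; 1, 0]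

/-- For a rational 0 ≤ α < 1 with even-length palindromic continued fraction
expansion [0;a_1,...,a_k], numerator p = p_k and denominator r = q_k, one has
r·p_{k-1} - p² = 1; in particular p² ≡ -1 (mod r).  Indexing as usual shifted:
`p (n+1)` denotes p_n. -/
theorem stmt5 (k : ℕ) (hk : Even k) (hk0 : 0 < k)
    (a : ℕ → ℤ) (ha : ∀ i, 1 ≤ i → i ≤ k → 0 < a i)
    (hpal : ∀ i, 1 ≤ i → i ≤ k → a i = a (k + 1 - i))
    (p q : ℕ → ℤ)
    (hp0 : p 0 = 1) (hp1 : p 1 = 0) (hq0 : q 0 = 0) (hq1 : q 1 = 1)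
    (hp : ∀ n, p (n + 2) = a (n + 1) * p (n + 1) + p n)
    (hq : ∀ n, q (n + 2) = a (n + 1) * q (n + 1) + q n) :
    q (k + 1) * p k - (p (k + 1)) ^ 2 = 1 ∧
      (p (k + 1)) ^ 2 ≡ -1 [ZMOD q (k + 1)] := by
  -- The matrix product identity
  have key : ∀ n, ((List.range n).map (fun i => Mcf (a (i+1)))).prod
      = !![q (n+1), q n; p (n+1), p n] := by
    intro n
    induction n with
    | zero =>
      simp only [List.range_zero, List.map_nil, List.prod_nil, hp0, hp1, hq0, hq1]
      ext i j
      fin_cases i <;> fin_cases j <;> simp [Matrix.one_apply]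
    | succ n ih =>
      rw [List.range_succ, List.map_append, List.prod_append, ih]
      simp only [List.map_cons, List.map_nil, List.prod_cons, List.prod_nil, mul_one]
      rw [Mcf, Matrix.mul_fin_two, hp n, hq n]
      congr 1 <;> ring
  -- palindromic list
  have hrev : ((List.range k).map (fun i => Mcf (a (i+1)))).reverse
      = (List.range k).map (fun i => Mcf (a (i+1))) := by
    apply List.ext_getElem
    · simp
    · intro i h1 h2
      simp only [List.length_reverse, List.length_map, List.length_range] at h1
      rw [List.getElem_reverse]
      simp only [List.getElem_map, List.getElem_range, List.length_map, List.length_range]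
      have := hpal (i+1) (by omega) (by omega)
      have h3 : k + 1 - (i + 1) = k - 1 - i + 1 := by omega
      rw [h3] at this
      exact congrArg Mcf this.symm
  -- symmetry of the product
  have hsymm : (((List.range k).map (fun i => Mcf (a (i+1)))).prod).transpose
      = ((List.range k).map (fun i => Mcf (a (i+1)))).prod := by
    rw [Matrix.transpose_list_prod]
    have : List.map Matrix.transpose ((List.range k).map (fun i => Mcf (a (i+1))))
        = (List.range k).map (fun i => Mcf (a (i+1))) := by
      rw [List.map_map]
      apply List.map_congr_left
      intro i _
      show (Mcf (a (i+1))).transpose = Mcf (a (i+1))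
      ext r c
      fin_cases r <;> fin_cases c <;> simp [Mcf]
    rw [this, hrev]
  -- q k = p (k+1)
  have hqp : q k = p (k + 1) := by
    have := congrArg (fun m => m 0 1) (key k ▸ hsymm)
    exact (by simpa [Matrix.transpose_apply] using this : p (k+1) = q k).symm
  -- determinant identity by induction
  have hdet : ∀ n, q (n+1) * p n - q n * p (n+1) = (-1 : ℤ) ^ n := by
    intro n
    induction n with
    | zero => simp [hp0, hp1, hq0, hq1]
    | succ n ih =>
      rw [hp n, hq n, pow_succ]
      nlinarith [ih]
  have hD : q (k+1) * p k - q k * p (k+1) = 1 := by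
    rw [hdet k, hk.neg_one_pow]
  have main : q (k + 1) * p k - (p (k + 1)) ^ 2 = 1 := by
    rw [← hqp] at *
    nlinarith [hD]
  refine ⟨main, ?_⟩
  have : (-1 : ℤ) - (p (k+1))^2 = q (k+1) * (-(p k)) := by linarith [main]
  exact Int.modEq_iff_dvd.mpr ⟨-(p k), this⟩
end

section
/- Let α, β be real numbers with 3 + α - β ≠ 0, and define α.β = (α+β)/2 + (Δ_β - Δ_α)/(3 + α - β) where Δ_α = (1 - 1/r_α²)/2 and Δ_β = (1 - 1/r_β²)/2 for positive reals r_α, r_β. If P(x) = (x² + 3x + 2)/2 and P(α - β) = Δ_α + Δ_β, then setting r_{α.β} = r_α r_β (3 + α - β), the identities (α.β) - α = 1/(r_α²(3 + α - β)) and β - (α.β) = 1/(r_β²(3 + α - β)) hold. -/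
/-!
Write `a = 1/r_α²`, `b = 1/r_β²` and `x = α - β`. The relation `P(x) = Δ_α + Δ_β` says exactly
`x (3 + x) = -(a + b)`; multiplying `(α.β) - α = -x/2 + (a - b) / (2 (3 + x))` by `3 + x` then gives
`(a + b)/2 + (a - b)/2 = a`, and symmetrically for `β - (α.β)`.
-/

section Field

variable {K : Type*} [Field K] [NeZero (2 : K)] {α β a b : K}

theorem sub_mul_three_add_sub_eq (hrel :
    ((α - β) ^ 2 + 3 * (α - β) + 2) / 2 = (1 - a) / 2 + (1 - b) / 2) :
    (α - β) * (3 + α - β) = -(a + b) := by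
  field_simp at hrel
  linear_combination hrel

variable (hx : 3 + α - β ≠ 0) (hrel : (α - β) * (3 + α - β) = -(a + b))
include hx hrel

theorem prod_sub_left_eq :
    (α + β) / 2 + ((1 - b) / 2 - (1 - a) / 2) / (3 + α - β) - α = a / (3 + α - β) := by
  field_simp
  linear_combination -hrel

theorem right_sub_prod_eq :
    β - ((α + β) / 2 + ((1 - b) / 2 - (1 - a) / 2) / (3 + α - β)) = b / (3 + α - β) := by
  field_simp
  linear_combination -hrel

end Field

theorem stmt7_general (α β rα rβ : ℝ)
    (h : 3 + α - β ≠ 0)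
    (P : ℝ → ℝ) (hP : ∀ x, P x = (x ^ 2 + 3 * x + 2) / 2)
    (Δα Δβ : ℝ) (hΔα : Δα = (1 - 1 / rα ^ 2) / 2) (hΔβ : Δβ = (1 - 1 / rβ ^ 2) / 2)
    (hrel : P (α - β) = Δα + Δβ) :
    ((α + β) / 2 + (Δβ - Δα) / (3 + α - β)) - α = 1 / (rα ^ 2 * (3 + α - β)) ∧
      β - ((α + β) / 2 + (Δβ - Δα) / (3 + α - β)) = 1 / (rβ ^ 2 * (3 + α - β)) := by
  subst hΔα hΔβ
  rw [hP] at hrel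
  have hquad := sub_mul_three_add_sub_eq hrel
  rw [← div_div 1 (rα ^ 2), ← div_div 1 (rβ ^ 2)]
  exact ⟨prod_sub_left_eq h hquad, right_sub_prod_eq h hquad⟩

/-- With Δ_α = (1-1/r_α²)/2, Δ_β = (1-1/r_β²)/2 for positive reals r_α, r_β,
P(x) = (x²+3x+2)/2, and assuming 3+α-β ≠ 0 and P(α-β) = Δ_α + Δ_β, the
product α.β = (α+β)/2 + (Δ_β-Δ_α)/(3+α-β) satisfies
(α.β) - α = 1/(r_α²(3+α-β)) and β - (α.β) = 1/(r_β²(3+α-β)). -/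
theorem stmt7 (α β rα rβ : ℝ) (hrα : 0 < rα) (hrβ : 0 < rβ)
    (h : 3 + α - β ≠ 0)
    (P : ℝ → ℝ) (hP : ∀ x, P x = (x ^ 2 + 3 * x + 2) / 2)
    (Δα Δβ : ℝ) (hΔα : Δα = (1 - 1 / rα ^ 2) / 2) (hΔβ : Δβ = (1 - 1 / rβ ^ 2) / 2)
    (hrel : P (α - β) = Δα + Δβ) :
    ((α + β) / 2 + (Δβ - Δα) / (3 + α - β)) - α = 1 / (rα ^ 2 * (3 + α - β)) ∧
      β - ((α + β) / 2 + (Δβ - Δα) / (3 + α - β)) = 1 / (rβ ^ 2 * (3 + α - β)) :=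
  stmt7_general α β rα rβ h P hP Δα Δβ hΔα hΔβ hrel
end

section
/- Let α < β be rationals with denominators r_α, r_β, set Δ_α = (1−1/r_α²)/2, Δ_β = (1−1/r_β²)/2, and assume P(α−β) = Δ_α + Δ_β where P(x) = (x²+3x+2)/2, with β − α ≤ 1/2 and 3 + α − β > 0. Define β' := α.β = (α+β)/2 + (Δ_β − Δ_α)/(3+α−β). Then (Δ_{β'} − Δ_α)/(α − β') < −1, where Δ_{β'} = (1 − 1/r_{β'}²)/2 with r_{β'} = r_α r_β (3+α−β). -/
/-- Let α < β be rationals with denominators r_α, r_β, with β - α ≤ 1/2 and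
3+α-β > 0, Δ_α = (1-1/r_α²)/2, Δ_β = (1-1/r_β²)/2, P(x) = (x²+3x+2)/2, and
assume P(α-β) = Δ_α + Δ_β.  With β' = α.β = (α+β)/2 + (Δ_β-Δ_α)/(3+α-β),
r_{β'} = r_α r_β(3+α-β) and Δ_{β'} = (1-1/r_{β'}²)/2, one has
(Δ_{β'} - Δ_α)/(α - β') < -1. -/
theorem stmt17 (α β : ℚ) (hαβ : α < β) (hle : (β : ℝ) - (α : ℝ) ≤ 1 / 2)
    (hpos : (0 : ℝ) < 3 + (α : ℝ) - (β : ℝ))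
    (P : ℝ → ℝ) (hP : ∀ x, P x = (x ^ 2 + 3 * x + 2) / 2)
    (rα rβ : ℝ) (hrα : rα = (α.den : ℝ)) (hrβ : rβ = (β.den : ℝ))
    (Δα Δβ : ℝ) (hΔα : Δα = (1 - 1 / rα ^ 2) / 2) (hΔβ : Δβ = (1 - 1 / rβ ^ 2) / 2)
    (hrel : P ((α : ℝ) - (β : ℝ)) = Δα + Δβ)
    (β' : ℝ) (hβ' : β' = ((α : ℝ) + (β : ℝ)) / 2 + (Δβ - Δα) / (3 + (α : ℝ) - (β : ℝ)))
    (rβ' : ℝ) (hrβ' : rβ' = rα * rβ * (3 + (α : ℝ) - (β : ℝ)))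
    (Δβ' : ℝ) (hΔβ' : Δβ' = (1 - 1 / rβ' ^ 2) / 2) :
    (Δβ' - Δα) / ((α : ℝ) - β') < -1 := by
  set a := (α : ℝ) with ha
  set b := (β : ℝ) with hb
  set s := 3 + a - b with hs
  have hab : a < b := by rw [ha, hb]; exact_mod_cast hαβ
  clear_value a b s
  have hrα1 : (1 : ℝ) ≤ rα := by
    rw [hrα]; exact_mod_cast Nat.one_le_cast.mpr α.pos
  have hrβ1 : (1 : ℝ) ≤ rβ := by
    rw [hrβ]; exact_mod_cast Nat.one_le_cast.mpr β.pos
  have hrα0 : rα ≠ 0 := by linarith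
  have hrβ0 : rβ ≠ 0 := by linarith
  have hs0 : s ≠ 0 := ne_of_gt hpos
  have hs52 : (5 : ℝ) / 2 ≤ s := by simp only [hs]; linarith
  -- from hrel, derive the sum identity
  have hrel' := hrel
  rw [hP, hΔα, hΔβ] at hrel'
  have hsum : 1 / rα ^ 2 + 1 / rβ ^ 2 = (b - a) * s := by
    simp only [hs]; linear_combination 2 * hrel'
  -- β' - a = 1/(rα^2 * s)
  have hdiff : β' - a = 1 / (rα ^ 2 * s) := by
    have hsum' : (1 / rα ^ 2 + 1 / rβ ^ 2) / s = b - a := by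
      rw [div_eq_iff hs0]; exact hsum
    have hb2 : b = a + (1 / (rα ^ 2 * s) + 1 / (rβ ^ 2 * s)) := by
      linear_combination -hsum'
    rw [hβ', hΔα, hΔβ, hb2]
    ring
  have hpos' : (0 : ℝ) < β' - a := by rw [hdiff]; positivity
  -- key inequality: rβ^2 s^2 - 2 rβ^2 s - 1 > 0
  have hkey : 0 < rβ ^ 2 * s ^ 2 - 2 * rβ ^ 2 * s - 1 := by
    have h1 : (0 : ℝ) ≤ (rβ ^ 2 - 1) * (s * (s - 2)) := by
      apply mul_nonneg <;> nlinarith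
    nlinarith [mul_nonneg (by linarith : (0:ℝ) ≤ s - 5/2) (by linarith : (0:ℝ) ≤ s + 1/2)]
  have h2 : β' - a < Δβ' - Δα := by
    rw [hdiff, hΔβ', hΔα, hrβ']
    have heq : (1 - 1 / (rα * rβ * s) ^ 2) / 2 - (1 - 1 / rα ^ 2) / 2
        - 1 / (rα ^ 2 * s)
        = (rβ ^ 2 * s ^ 2 - 2 * rβ ^ 2 * s - 1) / (2 * rα ^ 2 * rβ ^ 2 * s ^ 2) := by
      field_simp
      ring
    have hposfrac :
        0 < (rβ ^ 2 * s ^ 2 - 2 * rβ ^ 2 * s - 1) / (2 * rα ^ 2 * rβ ^ 2 * s ^ 2) := by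
      apply div_pos hkey; positivity
    linarith [heq, hposfrac]
  have hneg : a - β' < 0 := by linarith
  rw [div_lt_iff_of_neg hneg]
  linarith
end

section
/- Let α < β be real numbers and Δ_α, Δ_β, Δ_{α.β} ∈ ℝ with P(α−β) = Δ_α + Δ_β, where P(x) = (x²+3x+2)/2, 3+α−β > 0, and α.β = (α+β)/2 + (Δ_β−Δ_α)/(3+α−β). If 2Δ_β < 1, then the inequality (α + α.β)/2 + (Δ_{α.β} − Δ_α)/(α − α.β) < (α+β)/2 + (Δ_β − Δ_α)/(α − β) holds, where Δ_{α.β} = (1 − 1/r_{α.β}²)/2 with r_{α.β} = r_α r_β(3+α−β), Δ_α = (1−1/r_α²)/2, Δ_β = (1−1/r_β²)/2 for positive reals r_α, r_β. -/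
/-!
Write `a = 1/r_α²`, `b = 1/r_β²` and `s = 3 + α - β`, so that `Δ_α = (1 - a)/2`, `Δ_β = (1 - b)/2`
and `Δ_{α.β} = (1 - ab/s²)/2`. The relation `P(α - β) = Δ_α + Δ_β` becomes `a + b = s(3 - s)`;
it gives `α.β = α + a/s` and collapses the center of `W_{E_α,E_{α.β}}` to `α + (3 - 2s)/2`.
The center of `W_{E_α,E_β}` exceeds this by `b/(3 - s) = (1 - 2Δ_β)/(β - α)`.
-/

/-- The center of the numerical wall `W_{E_x,E_y}` for bundles of slopes `x, y` and
discriminants `Δx, Δy`. -/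
noncomputable def wallCenter (x y Δx Δy : ℝ) : ℝ := (x + y) / 2 + (Δy - Δx) / (x - y)

lemma wallCenter_self_add (x d Δx Δy : ℝ) :
    wallCenter x (x + d) Δx Δy = x + d / 2 - (Δy - Δx) / d := by
  unfold wallCenter
  ring

section Mutation

variable {α a b s : ℝ}

lemma mutation_slope_eq (hs : s ≠ 0) (hrel : a + b = s * (3 - s)) :
    (α + (α + (3 - s))) / 2 + ((1 - b) / 2 - (1 - a) / 2) / s = α + a / s := by
  field_simp
  linear_combination -hrel

lemma wallCenter_mutation (ha : a ≠ 0) (hs : s ≠ 0) (hrel : a + b = s * (3 - s)) :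
    wallCenter α (α + a / s) ((1 - a) / 2) ((1 - a * b / s ^ 2) / 2) = α + (3 - 2 * s) / 2 := by
  rw [wallCenter_self_add]
  field_simp
  linear_combination a * hrel

lemma wallCenter_mutation_lt (ha : a ≠ 0) (hb : 0 < b) (hs : s ≠ 0) (hs3 : s < 3)
    (hrel : a + b = s * (3 - s)) :
    wallCenter α (α + a / s) ((1 - a) / 2) ((1 - a * b / s ^ 2) / 2) <
      wallCenter α (α + (3 - s)) ((1 - a) / 2) ((1 - b) / 2) := by
  rw [wallCenter_mutation ha hs hrel, wallCenter_self_add]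
  have hd : 0 < 3 - s := by linarith
  have key : ((1 - b) / 2 - (1 - a) / 2) / (3 - s) < s / 2 := by
    rw [div_lt_iff₀ hd]
    nlinarith
  linarith

end Mutation

theorem stmt18_general (α β rα rβ : ℝ) (hrα : 0 < rα)
    (hαβ : α < β) (hpos : 0 < 3 + α - β)
    (P : ℝ → ℝ) (hP : ∀ x, P x = (x ^ 2 + 3 * x + 2) / 2)
    (Δα Δβ : ℝ) (hΔα : Δα = (1 - 1 / rα ^ 2) / 2) (hΔβ : Δβ = (1 - 1 / rβ ^ 2) / 2)
    (hrel : P (α - β) = Δα + Δβ)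
    (γ : ℝ) (hγ : γ = (α + β) / 2 + (Δβ - Δα) / (3 + α - β))
    (rγ : ℝ) (hrγ : rγ = rα * rβ * (3 + α - β))
    (Δγ : ℝ) (hΔγ : Δγ = (1 - 1 / rγ ^ 2) / 2)
    (h2 : 2 * Δβ < 1) :
    (α + γ) / 2 + (Δγ - Δα) / (α - γ) < (α + β) / 2 + (Δβ - Δα) / (α - β) := by
  obtain ⟨s, hs, rfl⟩ : ∃ s, 3 + α - β = s ∧ β = α + (3 - s) := ⟨_, rfl, by ring⟩
  rw [hs] at hγ hrγ hpos
  have hrel' : 1 / rα ^ 2 + 1 / rβ ^ 2 = s * (3 - s) := by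
    rw [hP, hΔα, hΔβ] at hrel
    linear_combination 2 * hrel
  have hγ' : γ = α + 1 / rα ^ 2 / s := by
    rw [hγ, hΔα, hΔβ, mutation_slope_eq hpos.ne' hrel']
  have hΔγ' : Δγ = (1 - 1 / rα ^ 2 * (1 / rβ ^ 2) / s ^ 2) / 2 := by
    rw [hΔγ, hrγ]
    ring
  show wallCenter α γ Δα Δγ < wallCenter α (α + (3 - s)) Δα Δβ
  rw [hγ', hΔγ', hΔα, hΔβ]
  exact wallCenter_mutation_lt (by positivity) (by linarith) hpos.ne' (by linarith) hrel'

/-- With positive reals r_α, r_β, reals α < β with 3+α-β > 0,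
Δ_α = (1-1/r_α²)/2, Δ_β = (1-1/r_β²)/2, P(x) = (x²+3x+2)/2,
P(α-β) = Δ_α + Δ_β, α.β = (α+β)/2 + (Δ_β-Δ_α)/(3+α-β),
r_{α.β} = r_α r_β(3+α-β), Δ_{α.β} = (1-1/r_{α.β}²)/2:
if 2Δ_β < 1 then
(α + α.β)/2 + (Δ_{α.β} - Δ_α)/(α - α.β) < (α+β)/2 + (Δ_β - Δ_α)/(α - β). -/
theorem stmt18 (α β rα rβ : ℝ) (hrα : 0 < rα) (hrβ : 0 < rβ)
    (hαβ : α < β) (hpos : 0 < 3 + α - β)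
    (P : ℝ → ℝ) (hP : ∀ x, P x = (x ^ 2 + 3 * x + 2) / 2)
    (Δα Δβ : ℝ) (hΔα : Δα = (1 - 1 / rα ^ 2) / 2) (hΔβ : Δβ = (1 - 1 / rβ ^ 2) / 2)
    (hrel : P (α - β) = Δα + Δβ)
    (γ : ℝ) (hγ : γ = (α + β) / 2 + (Δβ - Δα) / (3 + α - β))
    (rγ : ℝ) (hrγ : rγ = rα * rβ * (3 + α - β))
    (Δγ : ℝ) (hΔγ : Δγ = (1 - 1 / rγ ^ 2) / 2)
    (h2 : 2 * Δβ < 1) :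
    (α + γ) / 2 + (Δγ - Δα) / (α - γ) < (α + β) / 2 + (Δβ - Δα) / (α - β) :=
  stmt18_general α β rα rβ hrα hαβ hpos P hP Δα Δβ hΔα hΔβ hrel γ hγ rγ hrγ Δγ hΔγ h2
end

section
/- Let α be a rational with denominator r_α, Δ_α = (1−1/r_α²)/2, x_α = 3/2 − √(9/4 − 1/r_α²), and P(x) = (x²+3x+2)/2. Then (x_α/2)² − P(−x_α) + ((1/2 − Δ_α)/x_α)² = 5/4. -/
/-- For a rational α with denominator r_α, Δ_α = (1-1/r_α²)/2,
x_α = 3/2 - √(9/4 - 1/r_α²), P(x) = (x²+3x+2)/2: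
(x_α/2)² - P(-x_α) + ((1/2 - Δ_α)/x_α)² = 5/4. -/
theorem stmt19 (α : ℚ)
    (P : ℝ → ℝ) (hP : ∀ x, P x = (x ^ 2 + 3 * x + 2) / 2)
    (rα : ℝ) (hr : rα = (α.den : ℝ))
    (Δα : ℝ) (hΔ : Δα = (1 - 1 / rα ^ 2) / 2)
    (xα : ℝ) (hx : xα = 3 / 2 - Real.sqrt (9 / 4 - 1 / rα ^ 2)) :
    (xα / 2) ^ 2 - P (-xα) + ((1 / 2 - Δα) / xα) ^ 2 = 5 / 4 := by
  have hr1 : (1 : ℝ) ≤ rα := by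
    rw [hr]; exact_mod_cast Nat.one_le_cast.mpr α.den_pos
  have hrpos : (0 : ℝ) < rα := lt_of_lt_of_le one_pos hr1
  have hinv_pos : (0 : ℝ) < 1 / rα ^ 2 := by positivity
  have hinv_le : 1 / rα ^ 2 ≤ 1 := by
    rw [div_le_one (by positivity)]
    nlinarith
  set s := Real.sqrt (9 / 4 - 1 / rα ^ 2) with hs
  have hs_nonneg : 0 ≤ s := Real.sqrt_nonneg _
  have hs2 : s ^ 2 = 9 / 4 - 1 / rα ^ 2 := by
    rw [hs, Real.sq_sqrt]; linarith
  have hslt : s < 3 / 2 := by nlinarith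
  have hxpos : 0 < xα := by rw [hx]; linarith
  have hkey : xα * (3 - xα) = 1 / rα ^ 2 := by
    rw [hx]; nlinarith
  have hhalf : 1 / 2 - Δα = xα * (3 - xα) / 2 := by
    rw [hΔ, hkey]; ring
  have hdiv : (1 / 2 - Δα) / xα = (3 - xα) / 2 := by
    rw [hhalf]; field_simp
  rw [hP, hdiv]; ring
end
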